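/- Fix an integer m ≥ 1, a nonempty subset C_r ⊆ {1,…,m}, and let Ω_r := diag(1_{C_r}) − (1/|C_r|) 1_{C_r} 1_{C_r}^T ∈ ℝ^{m×m}. Let M ∈ ℝ^{m×m} be symmetric positive definite, let P_r be the Moore–Penrose pseudoinverse of Ω_r M Ω_r, and set E_r := P_r M. Then: (i) the column space of E_r equals the column space of Ω_r; (ii) E_r² = E_r; (iii) E_r x = x for every x in the column space of Ω_r. -/

import Mathlib

/-!
Since `M` is positive definite, `B = Ω M Ω` has the same kernel as `Ω`. The Moore–Penrose
identities make `P B` and `B P = (B P)ᵀ = Pᵀ B` symmetric idempotents with kernel `ker B`, and a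
symmetric idempotent is determined by its kernel, so `P B = B P = Ω`. Hence `P Ω = Ω P = P`, which
gives `E Ω = P B = Ω` and `Ω E = E`; all three claims follow from these two identities.
-/

open Matrix

/-- The centering matrix `Ω_C = diag(1_C) − (1/|C|) 1_C 1_Cᵀ` associated with a cluster `C`. -/
noncomputable def Omega {m : ℕ} (C : Finset (Fin m)) : Matrix (Fin m) (Fin m) ℝ :=
  Matrix.diagonal (fun i => if i ∈ C then (1 : ℝ) else 0) -
    (1 / (C.card : ℝ)) • Matrix.vecMulVec (fun i => if i ∈ C then (1 : ℝ) else 0)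
      (fun i => if i ∈ C then (1 : ℝ) else 0)

/-- `P` is the Moore–Penrose pseudoinverse of `B`. -/
def IsMP {m : ℕ} (B P : Matrix (Fin m) (Fin m) ℝ) : Prop :=
  B * P * B = B ∧ P * B * P = P ∧ (B * P)ᵀ = B * P ∧ (P * B)ᵀ = P * B

namespace Matrix

section CommRing

variable {n R : Type*} [Fintype n] [CommRing R]

theorem mul_eq_left_of_ker_le {A Q : Matrix n n R} (hQ : Q * Q = Q)
    (hker : ∀ x, Q *ᵥ x = 0 → A *ᵥ x = 0) : A * Q = A := by
  refine ext_iff_mulVec.mpr fun x => ?_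
  have hQx : Q *ᵥ (x - Q *ᵥ x) = 0 := by rw [mulVec_sub, mulVec_mulVec, hQ, sub_self]
  have := hker _ hQx
  rwa [mulVec_sub, mulVec_mulVec, sub_eq_zero, eq_comm] at this

theorem eq_of_isSymm_idempotent_of_ker_eq {A Q : Matrix n n R}
    (hA : Aᵀ = A) (hQ : Qᵀ = Q) (hAA : A * A = A) (hQQ : Q * Q = Q)
    (hker : ∀ x, A *ᵥ x = 0 ↔ Q *ᵥ x = 0) : A = Q := by
  have hAQ : A * Q = A := mul_eq_left_of_ker_le hQQ fun x => (hker x).mpr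
  have hQA : Q * A = Q := mul_eq_left_of_ker_le hAA fun x => (hker x).mp
  calc A = (A * Q)ᵀ := by rw [hAQ, hA]
    _ = Q * A := by rw [transpose_mul, hA, hQ]
    _ = Q := hQA

theorem range_mulVecLin_eq_of_mul_eq {A B : Matrix n n R} (hAB : A * B = B) (hBA : B * A = A) :
    LinearMap.range A.mulVecLin = LinearMap.range B.mulVecLin := by
  apply le_antisymm
  · rw [← hBA, mulVecLin_mul]
    exact LinearMap.range_comp_le_range _ _
  · rw [← hAB, mulVecLin_mul]
    exact LinearMap.range_comp_le_range _ _

end CommRing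

theorem centering_mul_self {n K : Type*} [Fintype n] [DecidableEq n] [Field K] {u : n → K}
    (hu : u * u = u) (hc : u ⬝ᵥ u ≠ 0) :
    (diagonal u - (1 / (u ⬝ᵥ u)) • vecMulVec u u) *
      (diagonal u - (1 / (u ⬝ᵥ u)) • vecMulVec u u) =
      diagonal u - (1 / (u ⬝ᵥ u)) • vecMulVec u u := by
  have hDD : diagonal u * diagonal u = diagonal u := by
    rw [diagonal_mul_diagonal, ← Pi.mul_def, hu]
  have hDV : diagonal u * vecMulVec u u = vecMulVec u u := by
    rw [mul_vecMulVec]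
    congr
    ext i
    rw [mulVec_diagonal, ← Pi.mul_apply, hu]
  have hVD : vecMulVec u u * diagonal u = vecMulVec u u := by
    rw [vecMulVec_mul]
    congr
    ext i
    rw [vecMul_diagonal, ← Pi.mul_apply, hu]
  have hVV : vecMulVec u u * vecMulVec u u = (u ⬝ᵥ u) • vecMulVec u u := by
    rw [vecMulVec_mul_vecMulVec, vecMulVec_smul]
  rw [sub_mul, mul_sub, mul_sub, Matrix.mul_smul, Matrix.mul_smul, smul_mul, smul_mul, hDD, hDV,
    hVD, hVV, smul_smul, smul_smul, mul_assoc, one_div_mul_cancel hc, mul_one]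
  abel

theorem PosDef.transpose_mul_mul_mulVec_eq_zero_iff {n l : Type*} [Fintype n] [Fintype l]
    {M : Matrix n n ℝ} (hM : M.PosDef) (A : Matrix n l ℝ) (x : l → ℝ) :
    (Aᵀ * M * A) *ᵥ x = 0 ↔ A *ᵥ x = 0 := by
  refine ⟨fun h => ?_, fun h => by rw [← mulVec_mulVec, h, mulVec_zero]⟩
  by_contra hAx
  have hquad : A *ᵥ x ⬝ᵥ M *ᵥ (A *ᵥ x) = x ⬝ᵥ (Aᵀ * M * A) *ᵥ x := by
    rw [← mulVec_mulVec, ← mulVec_mulVec, dotProduct_mulVec x Aᵀ, vecMul_transpose]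
  have hpos := hM.dotProduct_mulVec_pos hAx
  rw [star_trivial, hquad, h, dotProduct_zero] at hpos
  exact hpos.false

end Matrix

section Omega

variable {m : ℕ} (C : Finset (Fin m))

theorem Omega_transpose : (Omega C)ᵀ = Omega C := by
  rw [Omega, transpose_sub, transpose_smul, diagonal_transpose, transpose_vecMulVec]

theorem Omega_mul_self (hC : C.Nonempty) : Omega C * Omega C = Omega C := by
  set u : Fin m → ℝ := fun i => if i ∈ C then 1 else 0
  have hu : u * u = u := by ext i; by_cases hi : i ∈ C <;> simp [u, hi]
  have huu : u ⬝ᵥ u = C.card := by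
    rw [dotProduct, ← Pi.mul_def, hu]
    simp [u, Finset.sum_ite_mem]
  have := centering_mul_self hu (by rw [huu]; exact_mod_cast hC.card_pos.ne')
  rwa [huu] at this

end Omega

namespace IsMP

variable {m : ℕ} {B P : Matrix (Fin m) (Fin m) ℝ}

theorem transpose (h : IsMP B P) : IsMP Bᵀ Pᵀ := by
  obtain ⟨hBPB, hPBP, hBP, hPB⟩ := h
  refine ⟨?_, ?_, ?_, ?_⟩
  · rw [← transpose_mul, ← transpose_mul, ← Matrix.mul_assoc, hBPB]
  · rw [← transpose_mul, ← transpose_mul, ← Matrix.mul_assoc, hPBP]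
  · rw [← transpose_mul, hPB]
    exact hPB
  · rw [← transpose_mul, hBP]
    exact hBP

theorem pinv_mul_eq_of_ker_eq (h : IsMP B P) {Q : Matrix (Fin m) (Fin m) ℝ} (hQ : Qᵀ = Q)
    (hQQ : Q * Q = Q) (hker : ∀ x, B *ᵥ x = 0 ↔ Q *ᵥ x = 0) : P * B = Q := by
  obtain ⟨hBPB, hPBP, -, hPB⟩ := h
  refine eq_of_isSymm_idempotent_of_ker_eq hPB hQ ?_ hQQ fun x => ?_
  · rw [← Matrix.mul_assoc, hPBP]
  · rw [← hker, ← mulVec_mulVec]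
    refine ⟨fun hx => ?_, fun hx => by rw [hx, mulVec_zero]⟩
    rw [← hBPB, Matrix.mul_assoc, ← mulVec_mulVec, ← mulVec_mulVec, hx, mulVec_zero]

theorem mul_pinv_eq_of_ker_eq (h : IsMP B P) (hB : Bᵀ = B) {Q : Matrix (Fin m) (Fin m) ℝ}
    (hQ : Qᵀ = Q) (hQQ : Q * Q = Q) (hker : ∀ x, B *ᵥ x = 0 ↔ Q *ᵥ x = 0) : B * P = Q := by
  have hPt : Pᵀ * B = Q := by
    have ht := h.transpose
    rw [hB] at ht
    exact ht.pinv_mul_eq_of_ker_eq hQ hQQ hker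
  rw [← h.2.2.1, transpose_mul, hB, hPt]

end IsMP

theorem Er_projection_properties_general (m : ℕ) (C : Finset (Fin m)) (hC : C.Nonempty)
    (M : Matrix (Fin m) (Fin m) ℝ) (hM : M.PosDef)
    (P : Matrix (Fin m) (Fin m) ℝ) (hP : IsMP (Omega C * M * Omega C) P)
    (E : Matrix (Fin m) (Fin m) ℝ) (hE : E = P * M) :
    -- (i)
    LinearMap.range E.mulVecLin = LinearMap.range (Omega C).mulVecLin ∧
    -- (ii)
    E * E = E ∧
    -- (iii)
    (∀ x : Fin m → ℝ, x ∈ LinearMap.range (Omega C).mulVecLin → E.mulVec x = x) := by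
  set Ω := Omega C
  have hΩ : Ωᵀ = Ω := Omega_transpose C
  have hΩΩ : Ω * Ω = Ω := Omega_mul_self C hC
  have hMt : Mᵀ = M := by rw [← conjTranspose_eq_transpose_of_trivial, hM.isHermitian.eq]
  have hBt : (Ω * M * Ω)ᵀ = Ω * M * Ω := by
    rw [transpose_mul, transpose_mul, hΩ, hMt, Matrix.mul_assoc]
  have hker : ∀ x, (Ω * M * Ω) *ᵥ x = 0 ↔ Ω *ᵥ x = 0 := by
    simpa only [hΩ] using hM.transpose_mul_mul_mulVec_eq_zero_iff Ω
  have hPB : P * (Ω * M * Ω) = Ω := hP.pinv_mul_eq_of_ker_eq hΩ hΩΩ hker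
  have hBP : Ω * M * Ω * P = Ω := hP.mul_pinv_eq_of_ker_eq hBt hΩ hΩΩ hker
  have hPΩ : P * Ω = P := by rw [← hBP, ← Matrix.mul_assoc, hP.2.1]
  have hΩP : Ω * P = P := by rw [← hPB, hP.2.1]
  have hEΩ : E * Ω = Ω := by
    rw [hE, ← hPΩ]
    simpa only [Matrix.mul_assoc] using hPB
  have hΩE : Ω * E = E := by rw [hE, ← Matrix.mul_assoc, hΩP]
  refine ⟨range_mulVecLin_eq_of_mul_eq hEΩ hΩE, ?_, ?_⟩
  · calc E * E = E * Ω * E := by rw [Matrix.mul_assoc, hΩE]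
      _ = E := by rw [hEΩ, hΩE]
  · rintro _ ⟨y, rfl⟩
    rw [mulVecLin_apply, mulVec_mulVec, hEΩ]

/-- The map `E_r = P_r M` satisfies: its column space equals the column space of
`Ω_r`, it is idempotent, and it fixes every vector in the column space of `Ω_r`. -/
theorem Er_projection_properties (m : ℕ) (hm : 1 ≤ m) (C : Finset (Fin m)) (hC : C.Nonempty)
    (M : Matrix (Fin m) (Fin m) ℝ) (hM : M.PosDef)
    (P : Matrix (Fin m) (Fin m) ℝ) (hP : IsMP (Omega C * M * Omega C) P)
    (E : Matrix (Fin m) (Fin m) ℝ) (hE : E = P * M) :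
    -- (i)
    LinearMap.range E.mulVecLin = LinearMap.range (Omega C).mulVecLin ∧
    -- (ii)
    E * E = E ∧
    -- (iii)
    (∀ x : Fin m → ℝ, x ∈ LinearMap.range (Omega C).mulVecLin → E.mulVec x = x) :=
  Er_projection_properties_general m C hC M hM P hP E hE
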